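/- arXiv:2001.05258 — 6 statements merged into one kernel-verified Lean document; each statement's English description precedes it below -/
import Mathlib

section
/- Let G be a graph and F a 2-factor of G (a spanning subgraph with every vertex of degree exactly 2). If ψ(G) is the effective girth of G (the largest integer ψ such that ψ·c_ψ(G) ≤ n, where c_ψ(G) counts vertices lying on a cycle of length at most ψ), then the number of connected components of F is at most 2n/ψ(G). -/
open Finset
open scoped Classical

/-- Degree of a vertex in an edge set. -/
noncomputable def edgeDeg {V : Type*} (F : Finset (Sym2 V)) (v : V) : ℕ :=
  (F.filter (fun e => v ∈ e)).card

/-- `cyclesUpTo G k` = number of vertices lying on a cycle of length at most `k`. -/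
noncomputable def cyclesUpTo {V : Type*} [Fintype V] (G : SimpleGraph V) (k : ℕ) : ℕ :=
  (Finset.univ.filter (fun v : V => ∃ w : G.Walk v v, w.IsCycle ∧ w.length ≤ k)).card

/-! Every component of a 2-factor is a single cycle through all of its vertices. So each
component with at most `ψ` vertices contains a vertex lying on a cycle of length at most `ψ`,
and choosing one such vertex per component shows that there are at most `c_ψ(G) ≤ n / ψ` of
them; the components with more than `ψ` vertices are fewer than `n / ψ`. -/

lemma mul_card_le_two_mul_of_sum_eq {ι : Type*} [Fintype ι] (s : ι → ℕ) {k c n : ℕ}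
    (hs : ∑ i, s i = n) (hsmall : #{i | s i ≤ k} ≤ c) (hc : k * c ≤ n) :
    k * Fintype.card ι ≤ 2 * n := by
  have hlarge : k * #{i | ¬ s i ≤ k} ≤ n :=
    calc k * #{i | ¬ s i ≤ k} = ∑ _ ∈ {i | ¬ s i ≤ k}, k := by
          rw [sum_const, smul_eq_mul, mul_comm]
      _ ≤ ∑ i ∈ {i | ¬ s i ≤ k}, s i := sum_le_sum fun i hi => by
          simp only [mem_filter] at hi; omega
      _ ≤ ∑ i, s i := sum_le_sum_of_subset (filter_subset _ _)
      _ = n := hs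
  calc k * Fintype.card ι = k * #{i | s i ≤ k} + k * #{i | ¬ s i ≤ k} := by
        rw [← mul_add, card_filter_add_card_filter_not, card_univ]
    _ ≤ n + n := add_le_add (le_trans (Nat.mul_le_mul_left k hsmall) hc) hlarge
    _ = 2 * n := (two_mul n).symm

namespace SimpleGraph

variable {V : Type*}

lemma degree_fromEdgeSet_eq_edgeDeg [Fintype V] {F : Finset (Sym2 V)}
    (hF : ∀ e ∈ F, ¬ e.IsDiag) (v : V) :
    (fromEdgeSet (F : Set (Sym2 V))).degree v = edgeDeg F v := by
  rw [← card_incidenceFinset_eq_degree, edgeDeg]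
  congr 1
  ext e
  simp only [mem_incidenceFinset, incidenceSet, edgeSet_fromEdgeSet, mem_filter]
  simpa using fun _ => hF e

lemma IsRegularOfDegree.isCycles {G : SimpleGraph V} [G.LocallyFinite]
    (h : G.IsRegularOfDegree 2) : G.IsCycles := fun v _ => by
  rw [Set.ncard_eq_toFinset_card', Set.toFinset_card, card_neighborSet_eq_degree, h v]

lemma sum_ncard_supp [Fintype V] (G : SimpleGraph V) [Fintype G.ConnectedComponent] :
    ∑ K : G.ConnectedComponent, K.supp.ncard = Fintype.card V := by
  rw [← Nat.card_eq_fintype_card,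
    ← Nat.card_congr (Equiv.sigmaFiberEquiv G.connectedComponentMk), Nat.card_sigma]
  rfl

lemma Walk.IsCycle.length_eq_ncard_verts {G : SimpleGraph V} {v : V} {p : G.Walk v v}
    (hp : p.IsCycle) : p.length = p.toSubgraph.verts.ncard := by
  rw [Walk.verts_toSubgraph, ← List.coe_toFinset, Set.ncard_coe_finset, ← p.cons_tail_support,
    List.toFinset_cons, insert_eq_of_mem (List.mem_toFinset.2 (p.end_mem_tail_support hp.not_nil)),
    List.toFinset_card_of_nodup hp.support_nodup]
  simp [p.length_support]

lemma IsCycles.exists_isCycle_length_eq_ncard_supp [Finite V] {G : SimpleGraph V}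
    (h : G.IsCycles) {v : V} (hv : (G.neighborSet v).Nonempty) :
    ∃ p : G.Walk v v, p.IsCycle ∧ p.length = (G.connectedComponentMk v).supp.ncard := by
  obtain ⟨p, hp, hverts⟩ := h.exists_cycle_toSubgraph_verts_eq_connectedComponentSupp rfl hv
  exact ⟨p, hp, hverts ▸ hp.length_eq_ncard_verts⟩

lemma card_small_components_le_cyclesUpTo [Fintype V] {G H : SimpleGraph V}
    [H.LocallyFinite] [Fintype H.ConnectedComponent] (hle : H ≤ G) (hreg : H.IsRegularOfDegree 2)
    (k : ℕ) : #{K : H.ConnectedComponent | K.supp.ncard ≤ k} ≤ cyclesUpTo G k := by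
  refine card_le_card_of_injOn Quot.out (fun K hK => ?_) fun K _ K' _ h => ?_
  · obtain ⟨w, hw⟩ := (H.degree_pos_iff_exists_adj K.out).1 (by rw [hreg K.out]; norm_num)
    obtain ⟨p, hp, hlen⟩ := hreg.isCycles.exists_isCycle_length_eq_ncard_supp ⟨w, hw⟩
    rw [show H.connectedComponentMk K.out = K from K.out_eq] at hlen
    simp only [coe_filter, mem_univ, true_and, Set.mem_ofPred_eq] at hK ⊢
    exact ⟨p.mapLe hle, hp.mapLe hle, (p.length_mapLe hle).trans_le (hlen ▸ hK)⟩
  · rw [← K.out_eq, ← K'.out_eq, h]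

lemma cyclesUpTo_eq_zero_of_lt_three [Fintype V] (G : SimpleGraph V) {k : ℕ} (hk : k < 3) :
    cyclesUpTo G k = 0 := by
  rw [cyclesUpTo, card_eq_zero, filter_eq_empty_iff]
  rintro v - ⟨w, hw, hlen⟩
  have := hw.three_le_length
  omega

end SimpleGraph

theorem stmt0_general {V : Type*} [Fintype V] (G : SimpleGraph V)
    (F : Finset (Sym2 V)) (hFsub : F ⊆ G.edgeFinset)
    (hFdeg : ∀ v : V, edgeDeg F v = 2)
    (ψ : ℕ)
    (hψ : IsGreatest {p : ℕ | p * cyclesUpTo G p ≤ Fintype.card V} ψ) :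
    (Nat.card (SimpleGraph.fromEdgeSet (↑F : Set (Sym2 V))).ConnectedComponent : ℝ) ≤
      2 * Fintype.card V / ψ := by
  set H := SimpleGraph.fromEdgeSet (F : Set (Sym2 V))
  have hFG : ∀ e ∈ F, e ∈ G.edgeSet := fun e he => SimpleGraph.mem_edgeFinset.1 (hFsub he)
  have hle : H ≤ G := (SimpleGraph.fromEdgeSet_le G).2 (Set.sdiff_subset.trans hFG)
  have hreg : H.IsRegularOfDegree 2 := fun v => by
    rw [SimpleGraph.degree_fromEdgeSet_eq_edgeDeg
      (fun e he => G.not_isDiag_of_mem_edgeSet (hFG e he)), hFdeg]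
  have hψpos : 0 < ψ := hψ.2 (by simp [G.cyclesUpTo_eq_zero_of_lt_three (k := 1) (by norm_num)])
  have hkey := mul_card_le_two_mul_of_sum_eq _ H.sum_ncard_supp
    (SimpleGraph.card_small_components_le_cyclesUpTo hle hreg ψ) hψ.1
  rw [Nat.card_eq_fintype_card, le_div_iff₀ (by exact_mod_cast hψpos)]
  exact_mod_cast (mul_comm _ _).trans_le hkey

theorem stmt0 {V : Type*} [Fintype V] [DecidableEq V] (G : SimpleGraph V)
    (F : Finset (Sym2 V)) (hFsub : F ⊆ G.edgeFinset)
    (hFdeg : ∀ v : V, edgeDeg F v = 2)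
    (ψ : ℕ)
    (hψ : IsGreatest {p : ℕ | p * cyclesUpTo G p ≤ Fintype.card V} ψ) :
    (Nat.card (SimpleGraph.fromEdgeSet (↑F : Set (Sym2 V))).ConnectedComponent : ℝ) ≤
      2 * Fintype.card V / ψ :=
  stmt0_general G F hFsub hFdeg ψ hψ
end

section
/- Suppose G is a connected graph on n vertices with λ_2(G) = 0 (G contains a 2-factor) but κ_2(G) > 1, where κ_2(G) is the minimum number of connected components over all 2-factors of G. Then there exist vertices w ≠ z with wz not an edge of G such that κ_2(G + wz) < κ_2(G). -/
open Finset
open scoped Classical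

/-- A 2-factor: a spanning set of edges of `G` in which every vertex has degree exactly 2. -/
def IsTwoFactor {V : Type*} [Fintype V] (G : SimpleGraph V) (F : Finset (Sym2 V)) : Prop :=
  F ⊆ G.edgeFinset ∧ ∀ v : V, edgeDeg F v = 2

/-- Number of connected components of an edge set. -/
noncomputable def kappaEdges {V : Type*} (F : Finset (Sym2 V)) : ℕ :=
  Nat.card (SimpleGraph.fromEdgeSet (↑F : Set (Sym2 V))).ConnectedComponent

/-- `κ₂(G)`: the minimum number of connected components over all 2-factors of `G`. -/
noncomputable def kappaTwo {V : Type*} [Fintype V] (G : SimpleGraph V) : ℕ :=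
  sInf {c : ℕ | ∃ F : Finset (Sym2 V), IsTwoFactor G F ∧ kappaEdges F = c}

/-! Take a 2-factor `F` with `κ₂(G)` components. As `G` is connected, some edge `uv` of `G`
joins two components of `F`; let `uu', vv' ∈ F`. Exchanging `uu', vv'` for `uv, u'v'` keeps every
degree equal to 2, and it merges the two components: after deleting `uu'` and `vv'` from `F`
the odd-degree vertices are `u, u', v, v'`, so by the handshake lemma the component of `u` contains
another odd vertex, which can only be `u'` (likewise `v` still reaches `v'`). By minimality of `F`
the new edge `u'v'` is not an edge of `G`. -/

namespace SimpleGraph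

variable {V : Type*} {G H : SimpleGraph V}

lemma reachable_le_of_adj_le (h : G.Adj ≤ H.Reachable) : G.Reachable ≤ H.Reachable := by
  rw [reachable_eq_reflTransGen, reachable_eq_reflTransGen] at *
  exact Relation.reflTransGen_closed h

lemma Connected.exists_adj_not_reachable [Finite V] (hG : G.Connected)
    (hH : 1 < Nat.card H.ConnectedComponent) : ∃ u v, G.Adj u v ∧ ¬ H.Reachable u v := by
  by_contra! hadj
  have hH' : H.Preconnected := fun x y ↦ reachable_le_of_adj_le hadj x y (hG.preconnected x y)
  have := Finite.card_le_one_iff_subsingleton.mpr hH'.subsingleton_connectedComponent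
  omega

lemma card_connectedComponent_lt [Finite V] (hle : G.Reachable ≤ H.Reachable) {u v : V}
    (huv : H.Reachable u v) (hnuv : ¬ G.Reachable u v) :
    Nat.card H.ConnectedComponent < Nat.card G.ConnectedComponent := by
  have := Fintype.ofFinite V
  let f : G.ConnectedComponent → H.ConnectedComponent :=
    fun C ↦ C.lift H.connectedComponentMk fun _ _ p _ ↦ ConnectedComponent.sound (hle _ _ ⟨p⟩)
  simp only [Nat.card_eq_fintype_card]
  refine Fintype.card_lt_of_surjective_not_injective f ?_ fun hf ↦ hnuv ?_
  · exact fun C ↦ C.ind fun w ↦ ⟨G.connectedComponentMk w, rfl⟩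
  · exact ConnectedComponent.exact (hf (ConnectedComponent.sound huv))

lemma exists_ne_odd_degree_reachable [Fintype V] [DecidableRel G.Adj] {u : V}
    (hu : Odd (G.degree u)) : ∃ x, x ≠ u ∧ Odd (G.degree x) ∧ G.Reachable u x := by
  let C := G.connectedComponentMk u
  have hdeg (x : C.supp) : (G.induce C.supp).degree x = G.degree x :=
    degree_induce_of_neighborSet_subset fun y hy ↦ (C.mem_supp_congr_adj hy).mp x.2
  obtain ⟨x, hxu, hx⟩ := (G.induce C.supp).exists_ne_odd_degree_of_exists_odd_degree ⟨u, rfl⟩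
    (by rwa [hdeg])
  exact ⟨x, fun h ↦ hxu (Subtype.ext h), by rwa [← hdeg], ConnectedComponent.exact x.2.symm⟩

end SimpleGraph

open SimpleGraph

section EdgeDeg

variable {V : Type*} {F R A : Finset (Sym2 V)}

lemma edgeDeg_union (h : Disjoint F A) (x : V) :
    edgeDeg (F ∪ A) x = edgeDeg F x + edgeDeg A x := by
  rw [edgeDeg, filter_union, card_union_of_disjoint (disjoint_filter_filter h)]; rfl

lemma edgeDeg_sdiff_add (h : R ⊆ F) (x : V) : edgeDeg (F \ R) x + edgeDeg R x = edgeDeg F x := by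
  rw [← edgeDeg_union sdiff_disjoint, sdiff_union_of_subset h]

lemma edgeDeg_pos_iff {x : V} : 0 < edgeDeg F x ↔ ∃ e ∈ F, x ∈ e := by
  simp [edgeDeg, card_pos, Finset.Nonempty]

lemma edgeDeg_pair {e₁ e₂ : Sym2 V} (h : e₁ ≠ e₂) (x : V) :
    edgeDeg {e₁, e₂} x = (if x ∈ e₁ then 1 else 0) + if x ∈ e₂ then 1 else 0 := by
  unfold edgeDeg
  split_ifs <;> simp_all [filter_insert, filter_singleton]

lemma edgeDeg_pair_swap {u u' v v' : V} (huu' : u ≠ u') (hvv' : v ≠ v') (huv : u ≠ v)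
    (huv' : u ≠ v') (hu'v : u' ≠ v) (hu'v' : u' ≠ v') (x : V) :
    edgeDeg {s(u, u'), s(v, v')} x = edgeDeg {s(u, v), s(u', v')} x := by
  rw [edgeDeg_pair (by simp [*]), edgeDeg_pair (by simp [*])]
  simp only [Sym2.mem_iff]
  grind

lemma degree_fromEdgeSet [Fintype V] (hF : ∀ e ∈ F, ¬ e.IsDiag) (x : V) :
    (fromEdgeSet (F : Set (Sym2 V))).degree x = edgeDeg F x := by
  rw [← card_incidenceFinset_eq_degree, incidenceFinset_eq_filter, edgeDeg]
  congr 1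
  ext e
  simp only [mem_filter, mem_edgeFinset, edgeSet_fromEdgeSet, Set.mem_sdiff, mem_coe,
    Sym2.mem_diagSet]
  exact and_congr_left fun _ ↦ and_iff_left_of_imp (hF e)

end EdgeDeg

section TwoFactor

variable {V : Type*} [Fintype V] {G : SimpleGraph V} {F : Finset (Sym2 V)}

lemma IsTwoFactor.not_isDiag (hF : IsTwoFactor G F) {e : Sym2 V} (he : e ∈ F) : ¬ e.IsDiag :=
  G.not_isDiag_of_mem_edgeSet (mem_edgeFinset.mp (hF.1 he))

lemma IsTwoFactor.adj_of_mem (hF : IsTwoFactor G F) {x y : V} (h : s(x, y) ∈ F) :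
    (fromEdgeSet (F : Set (Sym2 V))).Adj x y :=
  ⟨h, fun hxy ↦ hF.not_isDiag h (Sym2.mk_isDiag_iff.mpr hxy)⟩

lemma IsTwoFactor.exists_mem (hF : IsTwoFactor G F) (x : V) : ∃ y, s(x, y) ∈ F := by
  obtain ⟨e, he, hxe⟩ := edgeDeg_pos_iff.mp (hF.2 x ▸ two_pos)
  obtain ⟨y, rfl⟩ := Sym2.mem_iff_exists.mp hxe
  exact ⟨y, he⟩

lemma kappaTwo_le (hF : IsTwoFactor G F) : kappaTwo G ≤ kappaEdges F :=
  Nat.sInf_le ⟨F, hF, rfl⟩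

lemma exists_isTwoFactor_kappaEdges_eq (h : 0 < kappaTwo G) :
    ∃ F, IsTwoFactor G F ∧ kappaEdges F = kappaTwo G :=
  Nat.sInf_mem (Nat.nonempty_of_pos_sInf h)

end TwoFactor

noncomputable def twoSwitch {V : Type*} (F : Finset (Sym2 V)) (u u' v v' : V) : Finset (Sym2 V) :=
  F \ {s(u, u'), s(v, v')} ∪ {s(u, v), s(u', v')}

section TwoSwitch

variable {V : Type*} [Fintype V] {G : SimpleGraph V} {F : Finset (Sym2 V)} {u u' v v' : V}

local notation "Γ" F:max => fromEdgeSet ((F : Finset (Sym2 V)) : Set (Sym2 V))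

lemma IsTwoFactor.reachable_sdiff (hF : IsTwoFactor G F) (hu : s(u, u') ∈ F) (hv : s(v, v') ∈ F)
    (hnr : ¬ (Γ F).Reachable u v) : (Γ (F \ {s(u, u'), s(v, v')})).Reachable u u' := by
  set R : Finset (Sym2 V) := {s(u, u'), s(v, v')}
  have hrv := (hF.adj_of_mem hv).reachable
  have hnuv' : ¬ (Γ F).Reachable u v' := by grind [Reachable.trans, Reachable.symm]
  have hne : u ≠ v ∧ u ≠ v' := by grind [Reachable.trans, Reachable.symm, Reachable.refl]
  have hdeg (x : V) : (Γ (F \ R)).degree x + edgeDeg R x = 2 := by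
    rw [degree_fromEdgeSet fun e he ↦ hF.not_isDiag (mem_sdiff.1 he).1,
      edgeDeg_sdiff_add (by simp [R, insert_subset_iff, hu, hv]), hF.2]
  have hR (x : V) :
      edgeDeg R x = (if x = u ∨ x = u' then 1 else 0) + if x = v ∨ x = v' then 1 else 0 := by
    rw [edgeDeg_pair (by simp [hne.1, hne.2])]
    simp only [Sym2.mem_iff]
  obtain ⟨x, hxu, hodd, hux⟩ := exists_ne_odd_degree_reachable (G := Γ (F \ R)) (u := u)
    (by have := hdeg u; simp only [hR, hne.1, hne.2] at this; grind)
  have hHux : (Γ F).Reachable u x := hux.mono (fromEdgeSet_mono (by simp))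
  -- in `F \ R` exactly the endpoints of the two removed edges have odd degree
  obtain rfl | rfl | rfl : x = u' ∨ x = v ∨ x = v' := by
    have := hdeg x
    rw [hR] at this
    grind
  · exact hux
  · exact absurd hHux hnr
  · exact absurd hHux hnuv'

lemma IsTwoFactor.isTwoFactor_twoSwitch (hF : IsTwoFactor G F) (huv : G.Adj u v)
    (hu : s(u, u') ∈ F) (hv : s(v, v') ∈ F) (hnr : ¬ (Γ F).Reachable u v) :
    IsTwoFactor (G ⊔ edge u' v') (twoSwitch F u u' v v') := by
  have hru := (hF.adj_of_mem hu).reachable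
  have hrv := (hF.adj_of_mem hv).reachable
  have hnr' : ¬ (Γ F).Reachable u' v' := by grind [Reachable.trans, Reachable.symm]
  have hne : u' ≠ v' ∧ u ≠ v' ∧ u' ≠ v := by
    grind [Reachable.trans, Reachable.symm, Reachable.refl]
  have hdisj : Disjoint F {s(u, v), s(u', v')} := by
    simp only [disjoint_insert_right, disjoint_singleton_right]
    exact ⟨fun h ↦ hnr (hF.adj_of_mem h).reachable, fun h ↦ hnr' (hF.adj_of_mem h).reachable⟩
  refine ⟨fun e he ↦ ?_, fun x ↦ ?_⟩
  · simp only [twoSwitch, mem_union, mem_sdiff, mem_insert, mem_singleton] at he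
    simp only [mem_edgeFinset, edgeSet_sup, edgeSet_edge_of_ne hne.1, Set.mem_union]
    rcases he with ⟨he, -⟩ | rfl | rfl
    · exact Or.inl (mem_edgeFinset.mp (hF.1 he))
    · exact Or.inl huv
    · exact Or.inr rfl
  · rw [twoSwitch, edgeDeg_union (disjoint_of_subset_left sdiff_subset hdisj),
      ← edgeDeg_pair_swap (hF.adj_of_mem hu).ne (hF.adj_of_mem hv).ne huv.ne
        hne.2.1 hne.2.2 hne.1,
      edgeDeg_sdiff_add (by simp [insert_subset_iff, hu, hv]), hF.2]

lemma IsTwoFactor.kappaEdges_twoSwitch_lt (hF : IsTwoFactor G F) (hu : s(u, u') ∈ F)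
    (hv : s(v, v') ∈ F) (hnr : ¬ (Γ F).Reachable u v) :
    kappaEdges (twoSwitch F u u' v v') < kappaEdges F := by
  have hsub : Γ (F \ {s(u, u'), s(v, v')}) ≤ Γ (twoSwitch F u u' v v') :=
    fromEdgeSet_mono (coe_subset.mpr subset_union_left)
  have hru := (hF.reachable_sdiff hu hv hnr).mono hsub
  have hrv := hF.reachable_sdiff hv hu (hnr ∘ Reachable.symm)
  rw [pair_comm] at hrv
  refine card_connectedComponent_lt (reachable_le_of_adj_le fun x y hxy ↦ ?_) ?_ hnr
  by_cases h : s(x, y) ∈ ({s(u, u'), s(v, v')} : Finset (Sym2 V))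
  · simp only [mem_insert, mem_singleton, Sym2.eq_iff] at h
    rcases h with (⟨rfl, rfl⟩ | ⟨rfl, rfl⟩) | ⟨rfl, rfl⟩ | ⟨rfl, rfl⟩
    exacts [hru, hru.symm, hrv.mono hsub, (hrv.mono hsub).symm]
  · exact Adj.reachable ⟨mem_union_left _ (mem_sdiff.2 ⟨hxy.1, h⟩), hxy.2⟩
  · exact Adj.reachable ⟨by simp [twoSwitch], fun h ↦ hnr (h ▸ .rfl)⟩

end TwoSwitch

theorem stmt4_general {V : Type*} [Fintype V] (G : SimpleGraph V)
    (hconn : G.Connected)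
    (hκ : 1 < kappaTwo G) :
    ∃ w z : V, w ≠ z ∧ ¬ G.Adj w z ∧
      kappaTwo (G ⊔ SimpleGraph.fromEdgeSet {s(w, z)}) < kappaTwo G := by
  obtain ⟨F, hF, hFκ⟩ := exists_isTwoFactor_kappaEdges_eq (zero_lt_one.trans hκ)
  obtain ⟨u, v, huv, hnr⟩ := hconn.exists_adj_not_reachable (hFκ ▸ hκ : 1 < kappaEdges F)
  obtain ⟨u', hu⟩ := hF.exists_mem u
  obtain ⟨v', hv⟩ := hF.exists_mem v
  have hF' := hF.isTwoFactor_twoSwitch huv hu hv hnr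
  have hlt : kappaTwo (G ⊔ edge u' v') < kappaTwo G :=
    (kappaTwo_le hF').trans_lt (hFκ ▸ hF.kappaEdges_twoSwitch_lt hu hv hnr)
  have hnle : ¬ edge u' v' ≤ G := fun h ↦ (sup_eq_left.mpr h ▸ hlt).false
  rw [edge_le_iff, not_or] at hnle
  exact ⟨u', v', hnle.1, hnle.2, hlt⟩

theorem stmt4 {V : Type*} [Fintype V] (G : SimpleGraph V)
    (hconn : G.Connected)
    (h2f : ∃ F : Finset (Sym2 V), IsTwoFactor G F)
    (hκ : 1 < kappaTwo G) :
    ∃ w z : V, w ≠ z ∧ ¬ G.Adj w z ∧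
      kappaTwo (G ⊔ SimpleGraph.fromEdgeSet {s(w, z)}) < kappaTwo G :=
  stmt4_general G hconn hκ
end

section
/- Let k ≥ 2 and 0 < γ < 1/2. Suppose H is an n-vertex graph with minimum degree at least k+2 that is (13/12, γ)-sparse and has λ_k(H) > 0. Then for n sufficiently large, the number of non-edges e of H with λ_k(H + e) < λ_k(H) is at least (γ²/(2(k+2)²))n². -/
open Finset
open scoped Classical

/-- Number of edges of `G` with both endpoints in `S`. -/
noncomputable def edgesIn {V : Type*} [Fintype V] (G : SimpleGraph V) (S : Finset V) : ℕ :=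
  (G.edgeFinset.filter (fun e => ∀ v ∈ e, v ∈ S)).card

/-- A `k`-matching. -/
def IsKMatching {V : Type*} [Fintype V] (G : SimpleGraph V) (k : ℕ) (F : Finset (Sym2 V)) : Prop :=
  F ⊆ G.edgeFinset ∧ ∀ v : V, edgeDeg F v ≤ k

/-- Maximum size of a `k`-matching in `G`. -/
noncomputable def maxKMatch {V : Type*} [Fintype V] (G : SimpleGraph V) (k : ℕ) : ℕ :=
  (G.edgeFinset.powerset.filter (fun F => IsKMatching G k F)).sup Finset.card

/-- The `k`-matching deficiency `λ_k(G)`. -/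
noncomputable def lamK {V : Type*} [Fintype V] (G : SimpleGraph V) (k : ℕ) : ℕ :=
  k * Fintype.card V / 2 - maxKMatch G k

/-!
Call `u` a deficient partner of `x` if some maximum `k`-matching leaves a free slot at both `x`
and `u` (two slots when `u = x`); adding a non-edge `xu` between partners enlarges the maximum
`k`-matching, so lowers `λ_k`. Let `D` be the partners of `x`. If `w ∉ D` is joined to `u ∈ D`
by an edge outside a witnessing matching `F`, then `w` is saturated by `F`, and swapping `uw`
into `F` against any `F`-edge `wv` shows that `v ∈ D`; so `w` has `k + 1 ≥ 3` neighbours in `D`.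
Each `u ∈ D` has at least `3` neighbours outside `F`, all in `D` or among such `w`. A set of
minimum degree `3` has density `3/2 > 13/12`, so sparsity forces `D` and these `w` to exceed
`γn` vertices, and sparsity applied to `D` with part of the `w` gives `|D| ≥ (23/36)⌊γn⌋`.
Partners of a deficient vertex are deficient themselves, so summing over the partners of one of
them yields `Ω((γn)²)` partner pairs; at most `2|E(H)| = O(n/γ)` of them are edges, by
averaging the sparsity condition over all `⌊γn⌋`-sets.
-/

variable {V : Type*}

section EdgeSets

lemma edgeDeg_insert {F : Finset (Sym2 V)} {e : Sym2 V} (he : e ∉ F) (v : V) :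
    edgeDeg (insert e F) v = edgeDeg F v + if v ∈ e then 1 else 0 := by
  unfold edgeDeg
  rw [filter_insert]
  split_ifs
  · rw [card_insert_of_notMem (by simp [he])]
  · rfl

variable [Fintype V]

lemma edgeDeg_eq_card_filter_mk_mem (F : Finset (Sym2 V)) (v : V) :
    edgeDeg F v = #{w | s(v, w) ∈ F} := by
  have : F.filter (v ∈ ·) = ({w | s(v, w) ∈ F} : Finset V).image (s(v, ·)) := by
    ext e
    simp only [mem_filter, mem_image, mem_univ, true_and]
    constructor
    · rintro ⟨he, hv⟩
      exact ⟨_, by rwa [Sym2.other_spec hv], Sym2.other_spec hv⟩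
    · rintro ⟨w, hw, rfl⟩
      exact ⟨hw, Sym2.mem_mk_left v w⟩
  rw [edgeDeg, this, card_image_of_injective _ fun a b h => Sym2.congr_right.1 h]

lemma sum_edgeDeg_le (F : Finset (Sym2 V)) : ∑ v, edgeDeg F v ≤ 2 * #F := by
  calc ∑ v, edgeDeg F v = ∑ e ∈ F, #e.toFinset := by
        simp only [edgeDeg, card_filter]
        rw [sum_comm]
        refine sum_congr rfl fun e _ => ?_
        rw [← card_filter]
        congr 1
        ext
        simp
    _ ≤ ∑ _e ∈ F, 2 := sum_le_sum fun e _ => by rw [Sym2.card_toFinset]; split_ifs <;> omega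
    _ = 2 * #F := by rw [sum_const, smul_eq_mul, mul_comm]

end EdgeSets

section Sparsity

variable [Fintype V] {G : SimpleGraph V}

lemma mul_card_le_two_mul_edgesIn {S : Finset V} {c : ℕ}
    (h : ∀ v ∈ S, c ≤ #{w ∈ S | G.Adj v w}) : c * #S ≤ 2 * edgesIn G S := by
  calc c * #S = ∑ _v ∈ S, c := by rw [sum_const, smul_eq_mul, mul_comm]
    _ ≤ ∑ v ∈ S, edgeDeg (G.edgeFinset.filter fun e => ∀ v ∈ e, v ∈ S) v :=
        sum_le_sum fun v hv => (h v hv).trans <| by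
          rw [edgeDeg_eq_card_filter_mk_mem]
          refine card_le_card fun w hw => ?_
          simp only [mem_filter, mem_univ, true_and, SimpleGraph.mem_edgeFinset,
            SimpleGraph.mem_edgeSet, Sym2.mem_iff, forall_eq_or_imp, forall_eq] at hw ⊢
          exact ⟨hw.2, hv, hw.1⟩
    _ ≤ ∑ v, edgeDeg (G.edgeFinset.filter fun e => ∀ v ∈ e, v ∈ S) v :=
        sum_le_sum_of_subset (subset_univ S)
    _ ≤ 2 * edgesIn G S := sum_edgeDeg_le _

lemma mul_card_le_edgesIn_union {D T : Finset V} (hDT : Disjoint D T) {c : ℕ}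
    (h : ∀ w ∈ T, c ≤ #{v ∈ D | G.Adj w v}) : c * #T ≤ edgesIn G (D ∪ T) := by
  set B : V → Finset (Sym2 V) := fun w => ({v ∈ D | G.Adj w v} : Finset V).image (s(w, ·))
  have hB : ∀ w, #(B w) = #{v ∈ D | G.Adj w v} := fun w =>
    card_image_of_injective _ fun a b h => Sym2.congr_right.1 h
  have hdisj : (T : Set V).PairwiseDisjoint B := by
    intro w _ w' hw' hne
    simp only [Function.onFun, disjoint_left, B, mem_image, mem_filter]
    rintro _ ⟨v, ⟨hv, -⟩, rfl⟩ ⟨v', -, he⟩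
    rcases Sym2.eq_iff.1 he with ⟨rfl, -⟩ | ⟨rfl, -⟩
    · exact hne rfl
    · exact disjoint_left.1 hDT hv hw'
  calc c * #T ≤ ∑ w ∈ T, #(B w) := by
        rw [mul_comm, ← smul_eq_mul, ← sum_const]
        exact sum_le_sum fun w hw => (h w hw).trans (hB w).ge
    _ = #(T.biUnion B) := (card_biUnion hdisj).symm
    _ ≤ edgesIn G (D ∪ T) := card_le_card fun e he => by
        obtain ⟨w, hw, v, hv, rfl⟩ := by simpa [B] using he
        simp only [mem_filter, SimpleGraph.mem_edgeFinset, SimpleGraph.mem_edgeSet,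
          Sym2.mem_iff, forall_eq_or_imp, forall_eq, mem_union]
        exact ⟨hv.2, Or.inr hw, Or.inl hv.1⟩

def IsSparseUpTo (G : SimpleGraph V) (β : ℝ) (m : ℕ) : Prop :=
  ∀ S : Finset V, #S ≤ m → (edgesIn G S : ℝ) ≤ β * #S

lemma IsSparseUpTo.three_sub_mul_le {β : ℝ} {m : ℕ} (hsparse : IsSparseUpTo G β m)
    (hβ₀ : 0 ≤ β) (hβ : β < 3 / 2) {D W : Finset V} (hD : D.Nonempty) (hDW : Disjoint D W)
    (hDdeg : ∀ u ∈ D, 3 ≤ #{v ∈ D ∪ W | G.Adj u v})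
    (hWdeg : ∀ w ∈ W, 3 ≤ #{v ∈ D | G.Adj w v}) :
    (3 - β) * m ≤ 3 * #D := by
  rcases le_or_gt m #D with hmD | hDm
  · have : (m : ℝ) ≤ #D := by exact_mod_cast hmD
    nlinarith
  rcases le_or_gt #(D ∪ W) m with hS | hS
  · have h3 : 3 * #(D ∪ W) ≤ 2 * edgesIn G (D ∪ W) := by
      refine mul_card_le_two_mul_edgesIn fun v hv => ?_
      rcases mem_union.1 hv with hv | hv
      · exact hDdeg v hv
      · exact (hWdeg v hv).trans (card_le_card (filter_subset_filter _ subset_union_left))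
    have h3' : (3 : ℝ) * #(D ∪ W) ≤ 2 * edgesIn G (D ∪ W) := by exact_mod_cast h3
    have hpos : (0 : ℝ) < #(D ∪ W) := by exact_mod_cast (hD.mono subset_union_left).card_pos
    nlinarith [hsparse _ hS]
  · rw [card_union_of_disjoint hDW] at hS
    obtain ⟨W', hW'W, hW'⟩ := exists_subset_card_eq (s := W) (n := m - #D) (by omega)
    have hDW' := hDW.mono_right hW'W
    have hcard : #(D ∪ W') = m := by rw [card_union_of_disjoint hDW']; omega
    have h3 := mul_card_le_edgesIn_union hDW' fun w hw => hWdeg w (hW'W hw)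
    have h3' : (3 : ℝ) * (m - #D) ≤ edgesIn G (D ∪ W') := by
      rw [← Nat.cast_sub hDm.le, ← hW']
      exact_mod_cast h3
    have := hsparse _ hcard.le
    rw [hcard] at this
    linarith

lemma sum_edgesIn_powersetCard {m : ℕ} (hm : 2 ≤ m) :
    ∑ S ∈ univ.powersetCard m, edgesIn G S =
      #G.edgeFinset * (Fintype.card V - 2).choose (m - 2) := by
  simp only [edgesIn, card_filter]
  rw [sum_comm]
  refine sum_const_nat fun e he => ?_
  have h2 : #e.toFinset = 2 :=
    Sym2.card_toFinset_of_not_isDiag e (G.not_isDiag_of_mem_edgeFinset he)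
  rw [← card_filter, ← card_univ, ← h2,
    ← card_filter_powersetCard_subset e.toFinset univ m (subset_univ _) (h2 ▸ hm)]
  congr 1
  ext S
  simp [subset_iff]

lemma IsSparseUpTo.card_edgeFinset_mul_le {β : ℝ} {m : ℕ} (hsparse : IsSparseUpTo G β m)
    (hm : 2 ≤ m) (hmn : m ≤ Fintype.card V) :
    #G.edgeFinset * ((m : ℝ) - 1) ≤ β * Fintype.card V * (Fintype.card V - 1) := by
  set n := Fintype.card V
  set c := (n - 2).choose (m - 2)
  have hc : (0 : ℝ) < c := by exact_mod_cast Nat.choose_pos (by omega)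
  have hm1 : (1 : ℝ) ≤ m := by exact_mod_cast (by omega : 1 ≤ m)
  have hsum : (#G.edgeFinset * c : ℝ) ≤ n.choose m * (β * m) := by
    calc (#G.edgeFinset * c : ℝ) = ∑ S ∈ univ.powersetCard m, (edgesIn G S : ℝ) := by
          exact_mod_cast (sum_edgesIn_powersetCard hm).symm
      _ ≤ ∑ S ∈ univ.powersetCard m, β * m := sum_le_sum fun S hS => by
          rw [mem_powersetCard] at hS
          simpa [hS.2] using hsparse S hS.2.le
      _ = n.choose m * (β * m) := by
          rw [sum_const, card_powersetCard, card_univ, nsmul_eq_mul]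
  have hchoose : (n.choose m : ℝ) * (m * (m - 1) / 2) = n * (n - 1) / 2 * c := by
    rw [← Nat.cast_choose_two, ← Nat.cast_choose_two]
    exact_mod_cast Nat.choose_mul hm
  refine le_of_mul_le_mul_right ?_ (by positivity : (0 : ℝ) < c * m / 2)
  calc #G.edgeFinset * ((m : ℝ) - 1) * (c * m / 2)
      = #G.edgeFinset * c * (m * (m - 1) / 2) := by ring
    _ ≤ n.choose m * (β * m) * (m * (m - 1) / 2) := by gcongr
    _ = β * n * (n - 1) * (c * m / 2) := by linear_combination β * m * hchoose

end Sparsity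

section Matchings

variable {k : ℕ} {F : Finset (Sym2 V)}

/-- `F` leaves a free slot at `x` and another one at `u`; two at `x` if `u = x`. -/
def HasFreeSlots (k : ℕ) (F : Finset (Sym2 V)) (x u : V) : Prop :=
  ∀ z, edgeDeg F z + (if z = x then 1 else 0) + (if z = u then 1 else 0) ≤ k

lemma HasFreeSlots.edgeDeg_left_lt {x u : V} (hs : HasFreeSlots k F x u) :
    edgeDeg F x < k := by
  have := hs x
  rw [if_pos rfl] at this
  omega

lemma HasFreeSlots.edgeDeg_right_lt {x u : V} (hs : HasFreeSlots k F x u) :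
    edgeDeg F u < k := by
  have := hs u
  rw [if_pos rfl] at this
  omega

lemma HasFreeSlots.swap {x u w v : V} (hs : HasFreeSlots k F x u) (huw : u ≠ w) (hwv : w ≠ v)
    (he : s(u, w) ∉ F) (hf : s(w, v) ∈ F) :
    HasFreeSlots k (insert s(u, w) (F.erase s(w, v))) x v := by
  intro z
  have h := hs z
  have herase := edgeDeg_insert (notMem_erase s(w, v) F) z
  rw [insert_erase hf] at herase
  rw [edgeDeg_insert fun h => he (mem_of_mem_erase h)]
  simp only [Sym2.mem_iff] at herase ⊢
  split_ifs at * <;> simp_all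

variable [Fintype V] {G : SimpleGraph V}

def IsMaxKMatching (G : SimpleGraph V) (k : ℕ) (F : Finset (Sym2 V)) : Prop :=
  IsKMatching G k F ∧ #F = maxKMatch G k

lemma IsKMatching.card_le_maxKMatch (hF : IsKMatching G k F) : #F ≤ maxKMatch G k :=
  le_sup (mem_filter.2 ⟨mem_powerset.2 hF.1, hF⟩)

lemma exists_isMaxKMatching (G : SimpleGraph V) (k : ℕ) : ∃ F, IsMaxKMatching G k F := by
  obtain ⟨F, hF, hcard⟩ := exists_mem_eq_sup (G.edgeFinset.powerset.filter (IsKMatching G k))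
    ⟨∅, mem_filter.2 ⟨empty_mem_powerset _, empty_subset _, fun v => by simp [edgeDeg]⟩⟩
    card
  exact ⟨F, (mem_filter.1 hF).2, hcard.symm⟩

lemma IsKMatching.insert {G' : SimpleGraph V} (hF : IsKMatching G k F) (hle : G ≤ G')
    {x y : V} (hxy : G'.Adj x y) (he : s(x, y) ∉ F) (hx : edgeDeg F x < k)
    (hy : edgeDeg F y < k) :
    IsKMatching G' k (insert s(x, y) F) := by
  refine ⟨insert_subset (by simpa using hxy)
    (hF.1.trans (SimpleGraph.edgeFinset_subset_edgeFinset.2 hle)), fun v => ?_⟩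
  rw [edgeDeg_insert he]
  have := hF.2 v
  split_ifs with hv
  · rcases Sym2.mem_iff.1 hv with rfl | rfl <;> omega
  · omega

lemma IsMaxKMatching.mk_mem_of_adj (hF : IsMaxKMatching G k F) {x y : V} (hxy : G.Adj x y)
    (hx : edgeDeg F x < k) (hy : edgeDeg F y < k) : s(x, y) ∈ F := by
  by_contra he
  have := (hF.1.insert le_rfl hxy he hx hy).card_le_maxKMatch
  rw [card_insert_of_notMem he, hF.2] at this
  omega

lemma lamK_lt_of_maxKMatch_lt {G' : SimpleGraph V} (hlam : 0 < lamK G k)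
    (h : maxKMatch G k < maxKMatch G' k) : lamK G' k < lamK G k := by
  unfold lamK at *
  omega

lemma degree_le_card_filter_mk_notMem_add_edgeDeg (G : SimpleGraph V) (F : Finset (Sym2 V))
    (u : V) : G.degree u ≤ #{v ∈ G.neighborFinset u | s(u, v) ∉ F} + edgeDeg F u := by
  rw [← G.card_neighborFinset_eq_degree,
    ← card_filter_add_card_filter_not (s := G.neighborFinset u) (fun v => s(u, v) ∈ F),
    add_comm, edgeDeg_eq_card_filter_mk_mem]
  have := card_le_card
    (filter_subset_filter (fun v => s(u, v) ∈ F) (subset_univ (G.neighborFinset u)))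
  omega

def IsJointlyDeficient (G : SimpleGraph V) (k : ℕ) (x u : V) : Prop :=
  ∃ F, IsMaxKMatching G k F ∧ HasFreeSlots k F x u

lemma IsJointlyDeficient.symm {x u : V} (h : IsJointlyDeficient G k x u) :
    IsJointlyDeficient G k u x := by
  obtain ⟨F, hF, hs⟩ := h
  exact ⟨F, hF, fun z => by have := hs z; omega⟩

lemma exists_isJointlyDeficient (hlam : 0 < lamK G k) : ∃ x u, IsJointlyDeficient G k x u := by
  obtain ⟨F, hF⟩ := exists_isMaxKMatching G k
  have hsum : ∑ v, edgeDeg F v + 2 ≤ ∑ _v : V, k := by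
    have := sum_edgeDeg_le F
    have := Nat.div_mul_le_self (k * Fintype.card V) 2
    rw [sum_const, card_univ, smul_eq_mul, mul_comm]
    unfold lamK at hlam
    rw [hF.2] at *
    omega
  obtain ⟨x, -, hx⟩ := exists_lt_of_sum_lt (by omega : ∑ v, edgeDeg F v < ∑ _v : V, k)
  by_cases h2 : edgeDeg F x + 2 ≤ k
  · refine ⟨x, x, F, hF, fun z => ?_⟩
    have := hF.1.2 z
    split_ifs <;> simp_all
  · have hrest : ∑ v ∈ univ.erase x, edgeDeg F v < ∑ _v ∈ univ.erase x, k := by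
      rw [← add_sum_erase _ _ (mem_univ x), ← add_sum_erase _ (fun _ => k) (mem_univ x)] at hsum
      omega
    obtain ⟨u, hu, hu'⟩ := exists_lt_of_sum_lt hrest
    have hux := ne_of_mem_erase hu
    refine ⟨x, u, F, hF, fun z => ?_⟩
    have := hF.1.2 z
    split_ifs <;> simp_all

lemma IsMaxKMatching.isJointlyDeficient_of_swap (hF : IsMaxKMatching G k F) {x u w v : V}
    (hs : HasFreeSlots k F x u) (huw : G.Adj u w) (he : s(u, w) ∉ F) (hf : s(w, v) ∈ F) :
    IsJointlyDeficient G k x v := by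
  have hwv : G.Adj w v := by simpa using hF.1.1 hf
  have he' : s(u, w) ∉ F.erase s(w, v) := fun h => he (mem_of_mem_erase h)
  have hslots := hs.swap huw.ne hwv.ne he hf
  refine ⟨_, ⟨⟨?_, fun z => ?_⟩, ?_⟩, hslots⟩
  · exact insert_subset (by simpa using huw) ((erase_subset _ _).trans hF.1.1)
  · have := hslots z
    omega
  · rw [card_insert_of_notMem he', card_erase_of_mem hf, ← hF.2]
    have := card_pos.2 ⟨_, hf⟩
    omega

lemma IsJointlyDeficient.lamK_sup_lt {x y : V} (hlam : 0 < lamK G k)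
    (h : IsJointlyDeficient G k x y) (hxy : x ≠ y) (hnadj : ¬G.Adj x y) :
    lamK (G ⊔ SimpleGraph.fromEdgeSet {s(x, y)}) k < lamK G k := by
  obtain ⟨F, hF, hs⟩ := h
  have he : s(x, y) ∉ F := fun he => hnadj (by simpa using hF.1.1 he)
  have hadj : (G ⊔ SimpleGraph.fromEdgeSet {s(x, y)}).Adj x y := by simp [hxy]
  have hF' := hF.1.insert le_sup_left hadj he hs.edgeDeg_left_lt hs.edgeDeg_right_lt
  have := hF'.card_le_maxKMatch
  rw [card_insert_of_notMem he, hF.2] at this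
  exact lamK_lt_of_maxKMatch_lt hlam this

noncomputable def deficientPartners (G : SimpleGraph V) (k : ℕ) (x : V) : Finset V :=
  {u | IsJointlyDeficient G k x u}

@[simp]
lemma mem_deficientPartners {x u : V} :
    u ∈ deficientPartners G k x ↔ IsJointlyDeficient G k x u := by
  simp [deficientPartners]

/-- `w` is saturated by `F`, and `u` together with the `k` `F`-neighbours of `w` are partners
of `x`. -/
lemma IsMaxKMatching.succ_le_card_adj_deficientPartners (hF : IsMaxKMatching G k F)
    {x u w : V} (hs : HasFreeSlots k F x u) (huw : G.Adj u w) (he : s(u, w) ∉ F) :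
    k + 1 ≤ #{v ∈ deficientPartners G k x | G.Adj w v} := by
  have hw : edgeDeg F w = k :=
    (hF.1.2 w).antisymm (not_lt.1 fun hw => he (hF.mk_mem_of_adj huw hs.edgeDeg_right_lt hw))
  have hu : u ∉ ({v | s(w, v) ∈ F} : Finset V) := by simpa [Sym2.eq_swap] using he
  calc k + 1 = #(insert u ({v | s(w, v) ∈ F} : Finset V)) := by
        rw [card_insert_of_notMem hu, ← edgeDeg_eq_card_filter_mk_mem, hw]
    _ ≤ _ := card_le_card fun v hv => ?_
  rw [mem_insert, mem_filter] at hv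
  rcases hv with rfl | ⟨-, hv⟩
  · exact mem_filter.2 ⟨mem_deficientPartners.2 ⟨F, hF, hs⟩, huw.symm⟩
  · exact mem_filter.2 ⟨mem_deficientPartners.2 (hF.isJointlyDeficient_of_swap hs huw he hv),
      by simpa using hF.1.1 hv⟩

theorem IsJointlyDeficient.three_sub_mul_le_card_deficientPartners (hk : 2 ≤ k)
    (hdeg : ∀ v, k + 2 ≤ G.degree v) {β : ℝ} {m : ℕ} (hsparse : IsSparseUpTo G β m)
    (hβ₀ : 0 ≤ β) (hβ : β < 3 / 2) {x u : V} (h : IsJointlyDeficient G k x u) :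
    (3 - β) * m ≤ 3 * #(deficientPartners G k x) := by
  set D := deficientPartners G k x
  set W : Finset V := {w | w ∉ D ∧ ∃ u F, IsMaxKMatching G k F ∧ HasFreeSlots k F x u ∧
    G.Adj u w ∧ s(u, w) ∉ F}
  have hDW : Disjoint D W := disjoint_right.2 fun w hw => (mem_filter.1 hw).2.1
  refine hsparse.three_sub_mul_le hβ₀ hβ ⟨u, mem_deficientPartners.2 h⟩ hDW
    (fun u hu => ?_) (fun w hw => ?_)
  · obtain ⟨F, hF, hs⟩ := mem_deficientPartners.1 hu
    have h3 : 3 ≤ #{v ∈ G.neighborFinset u | s(u, v) ∉ F} := by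
      have := degree_le_card_filter_mk_notMem_add_edgeDeg G F u
      have := hs.edgeDeg_right_lt
      have := hdeg u
      omega
    refine h3.trans (card_le_card fun v hv => ?_)
    obtain ⟨hadj, hvF⟩ := mem_filter.1 hv
    rw [SimpleGraph.mem_neighborFinset] at hadj
    refine mem_filter.2 ⟨?_, hadj⟩
    by_cases hvD : v ∈ D
    · exact mem_union_left _ hvD
    · exact mem_union_right _ (mem_filter.2 ⟨mem_univ _, hvD, u, F, hF, hs, hadj, hvF⟩)
  · obtain ⟨-, -, u, F, hF, hs, huw, he⟩ := mem_filter.1 hw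
    exact (by omega : 3 ≤ k + 1).trans (hF.succ_le_card_adj_deficientPartners hs huw he)

end Matchings

lemma sum_card_le_of_nonadj_mem [Fintype V] {G : SimpleGraph V} (X : Finset V)
    (D : V → Finset V) (P : Finset (Sym2 V))
    (hP : ∀ x ∈ X, ∀ y ∈ D x, x ≠ y → ¬G.Adj x y → s(x, y) ∈ P) :
    ∑ x ∈ X, #(D x) ≤ 2 * #P + #X + 2 * #G.edgeFinset := by
  have hx : ∀ x ∈ X, #(D x) ≤ edgeDeg P x + 1 + G.degree x := fun x hx => by
    calc #(D x) ≤ #(({y | s(x, y) ∈ P} : Finset V) ∪ insert x (G.neighborFinset x)) :=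
          card_le_card fun y hy => by
            by_cases hxy : x = y
            · simp [hxy]
            by_cases hadj : G.Adj x y
            · simp [hadj]
            · simp [hP x hx y hy hxy hadj]
      _ ≤ edgeDeg P x + 1 + G.degree x := by
          rw [edgeDeg_eq_card_filter_mk_mem, ← G.card_neighborFinset_eq_degree]
          have := card_insert_le x (G.neighborFinset x)
          have := card_union_le ({y | s(x, y) ∈ P} : Finset V) (insert x (G.neighborFinset x))
          omega
  calc ∑ x ∈ X, #(D x) ≤ ∑ x ∈ X, (edgeDeg P x + 1 + G.degree x) := sum_le_sum hx
    _ = ∑ x ∈ X, edgeDeg P x + #X + ∑ x ∈ X, G.degree x := by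
        rw [sum_add_distrib, sum_add_distrib, card_eq_sum_ones]
    _ ≤ ∑ x, edgeDeg P x + #X + ∑ x, G.degree x := by
        gcongr <;> exact subset_univ X
    _ ≤ 2 * #P + #X + 2 * #G.edgeFinset := by
        rw [G.sum_degrees_eq_twice_card_edges]
        have := sum_edgeDeg_le P
        omega

lemma sq_div_mul_sq_le_of_counts {k γ n m d s p e : ℝ} (hk : 2 ≤ k) (hγ : 0 < γ)
    (hγ3 : 100 ≤ γ ^ 3 * n) (hg : 100 ≤ γ * n) (hm : γ * n - 1 ≤ m)
    (hd : 23 / 36 * m ≤ d) (hs : d * (23 / 36 * m) ≤ s) (hcount : s ≤ 2 * p + d + 2 * e)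
    (he : e * (m - 1) ≤ 13 / 12 * n * (n - 1)) (he0 : 0 ≤ e) :
    γ ^ 2 / (2 * (k + 2) ^ 2) * n ^ 2 ≤ p := by
  have hn : 0 < n := pos_of_mul_pos_right (by linarith) hγ.le
  have heg : e * (γ * n) ≤ 13 / 6 * n ^ 2 := by
    nlinarith [mul_le_mul_of_nonneg_left (show γ * n / 2 ≤ m - 1 by linarith) he0]
  have he' : 2 * e ≤ (γ * n) ^ 2 / 20 := by
    have : 100 * n ^ 2 ≤ (γ * n) ^ 3 := by nlinarith
    nlinarith
  have hda : 5 / 8 * (γ * n) * (5 / 8 * (γ * n) - 1) ≤ d * (23 / 36 * m - 1) :=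
    mul_le_mul (by linarith) (by linarith) (by linarith) (by linarith)
  calc γ ^ 2 / (2 * (k + 2) ^ 2) * n ^ 2 = (γ * n) ^ 2 / (2 * (k + 2) ^ 2) := by ring
    _ ≤ (γ * n) ^ 2 / 32 :=
        div_le_div_of_nonneg_left (by positivity) (by norm_num) (by nlinarith)
    _ ≤ p := by nlinarith

theorem stmt7 (k : ℕ) (hk : 2 ≤ k) (γ : ℝ) (hγ0 : 0 < γ) (hγ2 : γ < 1 / 2) :
    ∃ N : ℕ, ∀ (V : Type) (_ : Fintype V) (_ : DecidableEq V) (H : SimpleGraph V),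
      N ≤ Fintype.card V →
      (∀ v : V, k + 2 ≤ H.degree v) →
      (∀ S : Finset V, (S.card : ℝ) ≤ γ * Fintype.card V →
        (edgesIn H S : ℝ) ≤ 13 / 12 * S.card) →
      0 < lamK H k →
      γ ^ 2 / (2 * ((k : ℝ) + 2) ^ 2) * (Fintype.card V : ℝ) ^ 2 ≤
        (((Finset.univ : Finset (Sym2 V)).filter (fun e => ¬ e.IsDiag ∧ e ∉ H.edgeFinset ∧
            lamK (H ⊔ SimpleGraph.fromEdgeSet {e}) k < lamK H k)).card : ℝ) := by
  refine ⟨⌈100 / γ ^ 3⌉₊, fun V _ _ H hN hdeg hsparse hlam => ?_⟩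
  set n := Fintype.card V
  have hγ3 : 100 ≤ γ ^ 3 * n := by
    rw [← div_le_iff₀' (by positivity)]
    exact (Nat.le_ceil _).trans (by exact_mod_cast hN)
  have hg : 100 ≤ γ * n := hγ3.trans <| by
    have : γ ^ 2 ≤ 1 := pow_le_one₀ hγ0.le (by linarith)
    nlinarith [mul_le_mul_of_nonneg_right this (by positivity : (0 : ℝ) ≤ γ * n)]
  set m := ⌊γ * n⌋₊
  have hsp : IsSparseUpTo H (13 / 12) m := fun S hS =>
    hsparse S ((Nat.cast_le.2 hS).trans (Nat.floor_le (by positivity)))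
  have hdens {x u : V} (h : IsJointlyDeficient H k x u) :=
    h.three_sub_mul_le_card_deficientPartners hk hdeg hsp (by norm_num) (by norm_num)
  obtain ⟨x₀, u₀, h₀⟩ := exists_isJointlyDeficient hlam
  set X := deficientPartners H k x₀
  have hs : (#X : ℝ) * (23 / 36 * m) ≤ ∑ x ∈ X, (#(deficientPartners H k x) : ℝ) := by
    rw [← nsmul_eq_mul, ← sum_const]
    exact sum_le_sum fun x hx => by linarith [hdens (mem_deficientPartners.1 hx).symm]
  set P := (univ : Finset (Sym2 V)).filter fun e => ¬ e.IsDiag ∧ e ∉ H.edgeFinset ∧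
    lamK (H ⊔ SimpleGraph.fromEdgeSet {e}) k < lamK H k
  have hcount := sum_card_le_of_nonadj_mem X (deficientPartners H k) P fun x _ y hy hxy hadj =>
    mem_filter.2 ⟨mem_univ _, by simpa using hxy, by simpa using hadj,
      (mem_deficientPartners.1 hy).lamK_sup_lt hlam hxy hadj⟩
  exact sq_div_mul_sq_le_of_counts (p := #P) (by exact_mod_cast hk) hγ0 hγ3 hg
    (Nat.sub_one_lt_floor _).le (by linarith [hdens h₀]) hs (by exact_mod_cast hcount)
    (hsp.card_edgeFinset_mul_le (Nat.le_floor (by push_cast; linarith))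
      (Nat.floor_le_of_le (by nlinarith))) (by positivity)
end

section
/- Let G be a graph, F a k-matching in G of maximum size, and let x, y be two distinct vertices with d_F(x) < k and d_F(y) < k. Suppose P = (y = v_0, v_1, …, v_ℓ) is an F-alternating walk of type ↑↑ (first edge not in F, and upon arriving at v_ℓ the last edge is not in the current symmetric difference). Then the symmetric difference H = F △ P satisfies d_H(v_ℓ) = d_F(v_ℓ) + 1 = k + 1; in particular, every vertex reachable from y by an F-alternating walk of type ↑↑ has d_F-degree exactly k. -/
open Finset
open scoped Classical

/-- `e` lies in the symmetric difference of `F` with the edge list `l`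
(edges counted with multiplicity). -/
def inSD {V : Type*} [DecidableEq V] (F : Finset (Sym2 V)) (l : List (Sym2 V))
    (e : Sym2 V) : Prop :=
  Odd ((if e ∈ F then 1 else 0) + l.count e)

/-- The symmetric difference `F △ P` of an edge set with the multiset of edges of a walk:
the edges appearing an odd number of times in total. -/
noncomputable def sdWalk {V : Type*} [DecidableEq V] (G : SimpleGraph V)
    (F : Finset (Sym2 V)) {u v : V} (w : G.Walk u v) : Finset (Sym2 V) :=
  (F ∪ w.edges.toFinset).filter (fun e => inSD F w.edges e)

/-- `w` is an `F`-alternating walk: membership of consecutive edges in the running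
symmetric difference alternates. -/
def IsAltWalk {V : Type*} [DecidableEq V] (G : SimpleGraph V)
    (F : Finset (Sym2 V)) {u v : V} (w : G.Walk u v) : Prop :=
  ∀ j : ℕ, j + 1 < w.edges.length →
    (inSD F (w.edges.take j) (w.edges.getD j (Sym2.diag u)) ↔
      ¬ inSD F (w.edges.take (j + 1)) (w.edges.getD (j + 1) (Sym2.diag u)))

/-- Type ↑↑: the first edge is not in `F` and the last edge is not in the running
symmetric difference. -/
def TypeUU {V : Type*} [DecidableEq V] (G : SimpleGraph V)
    (F : Finset (Sym2 V)) {u v : V} (w : G.Walk u v) : Prop :=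
  0 < w.edges.length ∧ w.edges.getD 0 (Sym2.diag u) ∉ F ∧
    ¬ inSD F (w.edges.take (w.edges.length - 1))
      (w.edges.getD (w.edges.length - 1) (Sym2.diag u))

/-- Type ↑↓: either the empty walk, or the first edge is not in `F` and the last edge is
in the running symmetric difference. -/
def TypeUD {V : Type*} [DecidableEq V] (G : SimpleGraph V)
    (F : Finset (Sym2 V)) {u v : V} (w : G.Walk u v) : Prop :=
  w.edges.length = 0 ∨ (w.edges.getD 0 (Sym2.diag u) ∉ F ∧
    inSD F (w.edges.take (w.edges.length - 1))
      (w.edges.getD (w.edges.length - 1) (Sym2.diag u)))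

/-!
Walking along an `F`-alternating walk toggles its edges one at a time. Toggling an edge changes
the degrees of both its ends by the same sign `±1`, and alternation makes consecutive signs
opposite, so at every interior visit of a vertex the two contributions cancel: only the two ends
of the walk change degree, by the signs of the first and the last step, and the size changes by
their average. For a walk of type ↑↑ both signs are `+1`, so if `d_F(v_ℓ) < k` the set `F △ P`
would be a `k`-matching larger than `F`.
-/

open scoped symmDiff

namespace Finset

variable {α : Type*} [DecidableEq α] {s : Finset α} {a : α}

theorem symmDiff_singleton_of_mem (h : a ∈ s) : s ∆ {a} = s.erase a := by
  ext x
  by_cases hx : x = a <;> simp [mem_symmDiff, hx, h]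

theorem symmDiff_singleton_of_notMem (h : a ∉ s) : s ∆ {a} = insert a s := by
  ext x
  by_cases hx : x = a <;> simp [mem_symmDiff, hx, h]

end Finset

section Toggle

variable {V : Type*} [DecidableEq V]

def toggleSign (F : Finset (Sym2 V)) (e : Sym2 V) : ℤ :=
  if e ∈ F then -1 else 1

theorem card_symmDiff_singleton (F : Finset (Sym2 V)) (e : Sym2 V) :
    ((F ∆ {e}).card : ℤ) = F.card + toggleSign F e := by
  unfold toggleSign
  split_ifs with he
  · rw [Finset.symmDiff_singleton_of_mem he, Finset.cast_card_erase_of_mem he]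
    ring
  · rw [Finset.symmDiff_singleton_of_notMem he, Finset.card_insert_of_notMem he]
    push_cast
    ring

theorem edgeDeg_symmDiff_singleton (F : Finset (Sym2 V)) (e : Sym2 V) (v : V) :
    (edgeDeg (F ∆ {e}) v : ℤ) = edgeDeg F v + toggleSign F e * if v ∈ e then 1 else 0 := by
  unfold edgeDeg toggleSign
  split_ifs with he hv hv
  · rw [Finset.symmDiff_singleton_of_mem he, Finset.filter_erase,
      Finset.cast_card_erase_of_mem (by simp [he, hv])]
    ring
  · rw [Finset.symmDiff_singleton_of_mem he, Finset.filter_erase,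
      Finset.erase_eq_of_notMem (by simp [hv])]
    ring
  · rw [Finset.symmDiff_singleton_of_notMem he, Finset.filter_insert, if_pos hv,
      Finset.card_insert_of_notMem (by simp [he])]
    push_cast
    ring
  · rw [Finset.symmDiff_singleton_of_notMem he, Finset.filter_insert, if_neg hv]
    ring

theorem ite_mem_sym2_mk {u b : V} (hub : u ≠ b) (v : V) :
    (if v ∈ s(u, b) then 1 else 0 : ℤ) = (if v = u then 1 else 0) + (if v = b then 1 else 0) := by
  by_cases hu : v = u <;> by_cases hb : v = b <;> simp_all

theorem inSD_nil (F : Finset (Sym2 V)) (e : Sym2 V) : inSD F [] e ↔ e ∈ F := by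
  by_cases h : e ∈ F <;> simp [inSD, h]

theorem inSD_cons (F : Finset (Sym2 V)) (a : Sym2 V) (l : List (Sym2 V)) (e : Sym2 V) :
    inSD F (a :: l) e ↔ inSD (F ∆ {a}) l e := by
  unfold inSD
  rw [List.count_cons]
  by_cases hea : e = a
  · subst hea
    by_cases h : e ∈ F <;> simp [h, Finset.mem_symmDiff, parity_simps]
  · have hmem : e ∈ F ∆ {a} ↔ e ∈ F := by simp [Finset.mem_symmDiff, hea]
    simp [hmem, Ne.symm hea]

end Toggle

section Walk

variable {V : Type*} [DecidableEq V] {G : SimpleGraph V}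

open SimpleGraph

theorem mem_sdWalk (F : Finset (Sym2 V)) {u z : V} (w : G.Walk u z) (e : Sym2 V) :
    e ∈ sdWalk G F w ↔ inSD F w.edges e := by
  simp only [sdWalk, Finset.mem_filter, Finset.mem_union, List.mem_toFinset,
    and_iff_right_iff_imp]
  intro h
  by_contra! hc
  simp [inSD, hc.1, List.count_eq_zero_of_not_mem hc.2] at h

theorem sdWalk_nil (F : Finset (Sym2 V)) (u : V) : sdWalk G F (Walk.nil' u) = F := by
  ext e
  simp [mem_sdWalk, inSD_nil]

theorem sdWalk_cons (F : Finset (Sym2 V)) {u b z : V} (h : G.Adj u b) (p : G.Walk b z) :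
    sdWalk G F (Walk.cons h p) = sdWalk G (F ∆ {s(u, b)}) p := by
  ext e
  rw [mem_sdWalk, mem_sdWalk, Walk.edges_cons, inSD_cons]

theorem sdWalk_subset_edgeFinset [Fintype G.edgeSet] {F : Finset (Sym2 V)}
    (hF : F ⊆ G.edgeFinset) {u z : V} (w : G.Walk u z) : sdWalk G F w ⊆ G.edgeFinset := by
  intro e he
  rcases Finset.mem_union.mp (Finset.mem_filter.mp he).1 with h | h
  · exact hF h
  · exact mem_edgeFinset.mpr (w.edges_subset_edgeSet (List.mem_toFinset.mp h))

/-- `1` if the `j`-th edge of `w` is added to the running symmetric difference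
`F △ (v₀, …, v_j)` when it is traversed, `-1` if it is removed (junk for `j ≥ w.length`). -/
noncomputable def stepSign (F : Finset (Sym2 V)) {u z : V} (w : G.Walk u z) (j : ℕ) : ℤ :=
  if inSD F (w.edges.take j) (w.edges.getD j (Sym2.diag u)) then -1 else 1

theorem isAltWalk_iff_stepSign {F : Finset (Sym2 V)} {u z : V} {w : G.Walk u z} :
    IsAltWalk G F w ↔ ∀ j, j + 1 < w.length → stepSign F w (j + 1) = -stepSign F w j := by
  simp only [IsAltWalk, Walk.length_edges]
  refine forall₂_congr fun j _ => ?_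
  unfold stepSign
  split_ifs <;> simp_all

theorem stepSign_cons_zero (F : Finset (Sym2 V)) {u b z : V} (h : G.Adj u b)
    (p : G.Walk b z) : stepSign F (Walk.cons h p) 0 = toggleSign F s(u, b) := by
  simp [stepSign, toggleSign, inSD_nil]

theorem stepSign_cons_succ (F : Finset (Sym2 V)) {u b z : V} (h : G.Adj u b)
    (p : G.Walk b z) {j : ℕ} (hj : j < p.length) :
    stepSign F (Walk.cons h p) (j + 1) = stepSign (F ∆ {s(u, b)}) p j := by
  rw [← Walk.length_edges] at hj
  simp only [stepSign, Walk.edges_cons, List.take_succ_cons, List.getD_cons_succ, inSD_cons,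
    List.getD_eq_getElem _ _ hj]

theorem IsAltWalk.of_cons {F : Finset (Sym2 V)} {u b z : V} {h : G.Adj u b}
    {p : G.Walk b z} (halt : IsAltWalk G F (Walk.cons h p)) :
    IsAltWalk G (F ∆ {s(u, b)}) p := by
  rw [isAltWalk_iff_stepSign] at halt ⊢
  intro j hj
  have := halt (j + 1) (by simp; omega)
  rwa [stepSign_cons_succ F h p hj, stepSign_cons_succ F h p (by omega)] at this

theorem IsAltWalk.stepSign_zero_of_cons {F : Finset (Sym2 V)} {u b z : V} {h : G.Adj u b}
    {p : G.Walk b z} (halt : IsAltWalk G F (Walk.cons h p)) (hp : 0 < p.length) :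
    stepSign (F ∆ {s(u, b)}) p 0 = -toggleSign F s(u, b) := by
  rw [← stepSign_cons_zero F h p, ← stepSign_cons_succ F h p hp]
  exact isAltWalk_iff_stepSign.mp halt 0 (by simpa using hp)

theorem stepSign_cons_length (F : Finset (Sym2 V)) {u b z : V} (h : G.Adj u b)
    (p : G.Walk b z) (hp : 0 < p.length) :
    stepSign F (Walk.cons h p) p.length = stepSign (F ∆ {s(u, b)}) p (p.length - 1) := by
  simpa [Nat.sub_add_cancel hp] using stepSign_cons_succ F h p (j := p.length - 1) (by omega)

theorem IsAltWalk.edgeDeg_sdWalk {F : Finset (Sym2 V)} {u z : V} {w : G.Walk u z}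
    (halt : IsAltWalk G F w) (hw : 0 < w.length) (v : V) :
    (edgeDeg (sdWalk G F w) v : ℤ) = edgeDeg F v + stepSign F w 0 * (if v = u then 1 else 0) +
      stepSign F w (w.length - 1) * (if v = z then 1 else 0) := by
  induction w generalizing F with
  | nil => simp at hw
  | @cons u b z h p ih =>
    have hstep := edgeDeg_symmDiff_singleton F s(u, b) v
    rw [ite_mem_sym2_mk h.ne] at hstep
    rw [sdWalk_cons, stepSign_cons_zero, Walk.length_cons, Nat.add_sub_cancel]
    rcases Nat.eq_zero_or_pos p.length with hp | hp
    · obtain rfl := Walk.eq_of_length_eq_zero hp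
      obtain rfl := (Walk.length_eq_zero_iff.mp hp).eq_nil
      rw [Walk.length_nil, stepSign_cons_zero, sdWalk_nil, hstep]
      ring
    · rw [ih halt.of_cons hp, halt.stepSign_zero_of_cons hp, stepSign_cons_length F h p hp, hstep]
      ring

theorem IsAltWalk.card_sdWalk {F : Finset (Sym2 V)} {u z : V} {w : G.Walk u z}
    (halt : IsAltWalk G F w) (hw : 0 < w.length) :
    2 * ((sdWalk G F w).card : ℤ) = 2 * F.card + stepSign F w 0 + stepSign F w (w.length - 1) := by
  induction w generalizing F with
  | nil => simp at hw
  | @cons u b z h p ih =>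
    have hstep := card_symmDiff_singleton F s(u, b)
    rw [sdWalk_cons, stepSign_cons_zero, Walk.length_cons, Nat.add_sub_cancel]
    rcases Nat.eq_zero_or_pos p.length with hp | hp
    · obtain rfl := Walk.eq_of_length_eq_zero hp
      obtain rfl := (Walk.length_eq_zero_iff.mp hp).eq_nil
      rw [Walk.length_nil, stepSign_cons_zero, sdWalk_nil, hstep]
      ring
    · rw [ih halt.of_cons hp, halt.stepSign_zero_of_cons hp, stepSign_cons_length F h p hp, hstep]
      ring

theorem TypeUU.stepSign_zero {F : Finset (Sym2 V)} {u z : V} {w : G.Walk u z}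
    (htype : TypeUU G F w) : stepSign F w 0 = 1 := by
  rw [stepSign, if_neg]
  rw [List.take_zero, inSD_nil]
  exact htype.2.1

theorem TypeUU.stepSign_last {F : Finset (Sym2 V)} {u z : V} {w : G.Walk u z}
    (htype : TypeUU G F w) : stepSign F w (w.length - 1) = 1 := by
  rw [stepSign, if_neg]
  rw [← Walk.length_edges]
  exact htype.2.2

theorem IsAltWalk.edgeDeg_sdWalk_of_typeUU {F : Finset (Sym2 V)} {u z : V} {w : G.Walk u z}
    (halt : IsAltWalk G F w) (htype : TypeUU G F w) (v : V) :
    edgeDeg (sdWalk G F w) v = edgeDeg F v + (if v = u then 1 else 0) + (if v = z then 1 else 0) := by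
  have := halt.edgeDeg_sdWalk (by simpa using htype.1) v
  rw [htype.stepSign_zero, htype.stepSign_last] at this
  linarith

theorem IsAltWalk.card_sdWalk_of_typeUU {F : Finset (Sym2 V)} {u z : V} {w : G.Walk u z}
    (halt : IsAltWalk G F w) (htype : TypeUU G F w) : (sdWalk G F w).card = F.card + 1 := by
  have := halt.card_sdWalk (by simpa using htype.1)
  rw [htype.stepSign_zero, htype.stepSign_last] at this
  omega

end Walk

section KMatching

variable {V : Type*} [Fintype V] {G : SimpleGraph V} {k : ℕ}

theorem IsKMatching.card_le_maxKMatch_s9 {H : Finset (Sym2 V)} (hH : IsKMatching G k H) :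
    H.card ≤ maxKMatch G k :=
  Finset.le_sup (f := Finset.card) (Finset.mem_filter.mpr ⟨Finset.mem_powerset.mpr hH.1, hH⟩)

theorem IsKMatching.sdWalk_of_typeUU [DecidableEq V] {F : Finset (Sym2 V)}
    (hF : IsKMatching G k F) {u z : V} (huz : u ≠ z) (hu : edgeDeg F u < k)
    (hz : edgeDeg F z < k) {w : G.Walk u z} (halt : IsAltWalk G F w) (htype : TypeUU G F w) :
    IsKMatching G k (sdWalk G F w) := by
  refine ⟨sdWalk_subset_edgeFinset hF.1 w, fun v => ?_⟩
  rw [halt.edgeDeg_sdWalk_of_typeUU htype v]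
  by_cases hvu : v = u
  · subst hvu
    rw [if_pos rfl, if_neg huz]
    omega
  by_cases hvz : v = z
  · subst hvz
    rw [if_neg hvu, if_pos rfl]
    omega
  simpa [hvu, hvz] using hF.2 v

end KMatching

theorem stmt9_general {V : Type*} [Fintype V] [DecidableEq V] (G : SimpleGraph V) (k : ℕ)
    (F : Finset (Sym2 V)) (hF : IsKMatching G k F) (hFmax : F.card = maxKMatch G k)
    (y : V) (hy : edgeDeg F y < k)
    (z : V) (hz : z ≠ y) (w : G.Walk y z)
    (halt : IsAltWalk G F w) (htype : TypeUU G F w) :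
    edgeDeg (sdWalk G F w) z = edgeDeg F z + 1 ∧ edgeDeg F z = k := by
  have hdeg : edgeDeg (sdWalk G F w) z = edgeDeg F z + 1 := by
    simpa [hz] using halt.edgeDeg_sdWalk_of_typeUU htype z
  refine ⟨hdeg, (hF.2 z).eq_of_not_lt fun hzk => ?_⟩
  have hcard := (hF.sdWalk_of_typeUU hz.symm hy hzk halt htype).card_le_maxKMatch_s9
  rw [halt.card_sdWalk_of_typeUU htype] at hcard
  omega

theorem stmt9 {V : Type*} [Fintype V] [DecidableEq V] (G : SimpleGraph V) (k : ℕ)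
    (F : Finset (Sym2 V)) (hF : IsKMatching G k F) (hFmax : F.card = maxKMatch G k)
    (x y : V) (hxy : x ≠ y) (hx : edgeDeg F x < k) (hy : edgeDeg F y < k)
    (z : V) (hz : z ≠ y) (w : G.Walk y z)
    (halt : IsAltWalk G F w) (htype : TypeUU G F w) :
    edgeDeg (sdWalk G F w) z = edgeDeg F z + 1 ∧ edgeDeg F z = k :=
  stmt9_general G k F hF hFmax y hy z hz w halt htype
end

section
/- Let G be a graph, F a k-matching in G with λ_k(F) = λ_k(G) > 0, and y a vertex with d_F(y) < k. Let A^{↑↓} be the set of endpoints of F-alternating walks of type ↑↓ from y (including y itself via the empty walk), and A^{↑↑} the set of endpoints of F-alternating walks of type ↑↑ from y. Then every vertex of A^{↑↓} \ ({y} ∪ A^{↑↑}) is an F-neighbour of some vertex of A^{↑↑}, hence |A^{↑↓} \ A^{↑↑}| ≤ k|A^{↑↑}| + 1. -/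
open Finset
open scoped Classical

/-- Endpoints of `F`-alternating walks of type ↑↓ from `y`. -/
noncomputable def Aud {V : Type*} [Fintype V] [DecidableEq V] (G : SimpleGraph V)
    (F : Finset (Sym2 V)) (y : V) : Finset V :=
  Finset.univ.filter (fun z : V => ∃ w : G.Walk y z, IsAltWalk G F w ∧ TypeUD G F w)

/-- Endpoints of `F`-alternating walks of type ↑↑ from `y`. -/
noncomputable def Auu {V : Type*} [Fintype V] [DecidableEq V] (G : SimpleGraph V)
    (F : Finset (Sym2 V)) (y : V) : Finset V :=
  Finset.univ.filter (fun z : V => ∃ w : G.Walk y z, IsAltWalk G F w ∧ TypeUU G F w)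

/-!
Among the alternating walks of type ↑↓ from `y` to a vertex `v ∉ {y} ∪ A^{↑↑}`, take a shortest
one. By alternation, dropping its last edge `uv` leaves a walk of type ↑↑, so `u ∈ A^{↑↑}`. If
`uv ∈ F` we are done. Otherwise `uv` lies in the running symmetric difference only because it was
traversed before, so `v` was visited earlier, at some step `m > 0`. The prefix up to that visit has
type ↑↑, impossible as `v ∉ A^{↑↑}`, or type ↑↓, impossible by minimality. The bound on
`|A^{↑↓} \ A^{↑↑}|` follows because every vertex has at most `k` `F`-neighbours.
-/

lemma List.getD_take_of_lt {α : Type*} (l : List α) {j n : ℕ} (h : j < n) (d : α) :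
    (l.take n).getD j d = l.getD j d := by
  simp only [List.getD_eq_getElem?_getD, List.getElem?_take, if_pos h]

section

variable {V : Type*} [DecidableEq V]

lemma mem_of_inSD_of_notMem {F : Finset (Sym2 V)} {l : List (Sym2 V)} {e : Sym2 V}
    (h : inSD F l e) (he : e ∉ F) : e ∈ l := by
  rw [inSD, if_neg he, zero_add] at h
  exact List.count_pos_iff.mp h.pos

lemma inSD_take_take_getD_iff {F : Finset (Sym2 V)} (l : List (Sym2 V)) {j n : ℕ} (h : j < n)
    (d : Sym2 V) :
    inSD F ((l.take n).take j) ((l.take n).getD j d) ↔ inSD F (l.take j) (l.getD j d) := by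
  rw [List.take_take, min_eq_left h.le, List.getD_take_of_lt l h]

end

namespace SimpleGraph.Walk

variable {V : Type*} {G : SimpleGraph V}

lemma getD_edges_of_lt {u v : V} (w : G.Walk u v) {i : ℕ} (hi : i < w.length) (d : Sym2 V) :
    w.edges.getD i d = s(w.getVert i, w.getVert (i + 1)) := by
  rw [List.getD_eq_getElem _ _ (by simpa using hi), getElem_edges]

lemma exists_getVert_eq_of_mk_mem_take_edges {u v a x : V} (w : G.Walk u v) {n : ℕ}
    (h : s(a, x) ∈ w.edges.take n) : ∃ m ≤ n, w.getVert m = x := by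
  rw [← edges_take] at h
  obtain ⟨m, hm, hmn⟩ :=
    mem_support_iff_exists_getVert.mp ((w.take n).snd_mem_support_of_mem_edges h)
  rw [take_getVert] at hm
  rw [take_length] at hmn
  exact ⟨m, by omega, by rwa [min_eq_right (by omega)] at hm⟩

variable [DecidableEq V] {F : Finset (Sym2 V)}

lemma isAltWalk_take {u v : V} {w : G.Walk u v} (h : IsAltWalk G F w) (n : ℕ) :
    IsAltWalk G F (w.take n) := by
  intro j hj
  rw [edges_take, List.length_take] at hj
  simp only [edges_take, inSD_take_take_getD_iff _ (by omega : j < n),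
    inSD_take_take_getD_iff _ (by omega : j + 1 < n)]
  exact h j (by omega)

variable [Fintype V] {y v : V} {w : G.Walk y v}

lemma getVert_mem_Auu (halt : IsAltWalk G F w) (hfirst : w.edges.getD 0 (Sym2.diag y) ∉ F)
    {m : ℕ} (hm : 0 < m) (hmℓ : m ≤ w.length)
    (hm' : ¬ inSD F (w.edges.take (m - 1)) (w.edges.getD (m - 1) (Sym2.diag y))) :
    w.getVert m ∈ Auu G F y := by
  simp only [Auu, Finset.mem_filter, Finset.mem_univ, true_and]
  refine ⟨w.take m, isAltWalk_take halt m, ?_, ?_, ?_⟩ <;>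
    simp only [edges_take, List.length_take, length_edges, min_eq_left hmℓ]
  · exact hm
  · rwa [List.getD_take_of_lt _ hm]
  · rwa [inSD_take_take_getD_iff _ (by omega)]

/-- Stated for all prefixes `w.take m` at once, so that minimality becomes induction on `m`. -/
lemma exists_mem_Auu_mk_getVert_mem (halt : IsAltWalk G F w)
    (hfirst : w.edges.getD 0 (Sym2.diag y) ∉ F) (m : ℕ) (hm : 0 < m) (hmℓ : m ≤ w.length)
    (hm' : inSD F (w.edges.take (m - 1)) (w.edges.getD (m - 1) (Sym2.diag y)))
    (hy : w.getVert m ≠ y) (hA : w.getVert m ∉ Auu G F y) :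
    ∃ u ∈ Auu G F y, s(u, w.getVert m) ∈ F := by
  induction m using Nat.strong_induction_on with
  | _ m ih =>
  rw [w.getD_edges_of_lt (by omega), Nat.sub_add_cancel hm] at hm'
  by_cases he : s(w.getVert (m - 1), w.getVert m) ∈ F
  · have h2 : 2 ≤ m := by
      by_contra h
      obtain rfl : m = 1 := by omega
      exact hfirst (by rwa [w.getD_edges_of_lt (by omega)])
    refine ⟨_, getVert_mem_Auu halt hfirst (m := m - 1) (by omega) (by omega) ?_, he⟩
    have halt' := halt (m - 2) (by simp only [length_edges]; omega)
    rw [show m - 2 + 1 = m - 1 by omega, w.getD_edges_of_lt (i := m - 1) (by omega),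
      Nat.sub_add_cancel hm] at halt'
    rw [show m - 1 - 1 = m - 2 by omega]
    exact fun h => halt'.mp h hm'
  · obtain ⟨m', hm'm, hm'v⟩ :=
      w.exists_getVert_eq_of_mk_mem_take_edges (mem_of_inSD_of_notMem hm' he)
    have hm'0 : 0 < m' := Nat.pos_of_ne_zero fun h => hy (by rw [← hm'v, h, getVert_zero])
    rw [← hm'v] at hy hA ⊢
    by_cases hm'' : inSD F (w.edges.take (m' - 1)) (w.edges.getD (m' - 1) (Sym2.diag y))
    · exact ih m' (by omega) hm'0 (by omega) hm'' hy hA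
    · exact absurd (getVert_mem_Auu halt hfirst hm'0 (by omega) hm'') hA

end SimpleGraph.Walk

section

variable {V : Type*} [Fintype V] [DecidableEq V]

lemma card_filter_mk_mem_le_edgeDeg (F : Finset (Sym2 V)) (u : V) :
    #{v | s(u, v) ∈ F} ≤ edgeDeg F u := by
  refine card_le_card_of_injOn (fun v => s(u, v)) (fun v hv => ?_)
    fun a _ b _ hab => Sym2.congr_right.mp hab
  simpa [edgeDeg] using hv

lemma card_sdiff_le_mul_add_one {F : Finset (Sym2 V)} {k : ℕ} (hk : ∀ u, edgeDeg F u ≤ k)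
    {S T : Finset V} (y : V) (h : ∀ v ∈ T \ insert y S, ∃ u ∈ S, s(u, v) ∈ F) :
    #(T \ S) ≤ k * #S + 1 := by
  have hsub : T \ S ⊆ insert y (S.biUnion fun u => {v | s(u, v) ∈ F}) := by
    intro v hv
    by_cases hvy : v = y
    · simp [hvy]
    · obtain ⟨u, hu, huv⟩ := h v (by simp_all)
      exact mem_insert_of_mem (mem_biUnion.mpr ⟨u, hu, by simpa using huv⟩)
  calc #(T \ S) ≤ #(S.biUnion fun u => {v | s(u, v) ∈ F}) + 1 :=
        (card_le_card hsub).trans (card_insert_le _ _)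
    _ ≤ #S * k + 1 := by
        gcongr
        exact card_biUnion_le_card_mul _ _ _ fun u _ =>
          (card_filter_mk_mem_le_edgeDeg F u).trans (hk u)
    _ = k * #S + 1 := by rw [mul_comm]

end

theorem stmt11_general {V : Type*} [Fintype V] [DecidableEq V] (G : SimpleGraph V) (k : ℕ)
    (F : Finset (Sym2 V)) (hF : IsKMatching G k F)
    (y : V) :
    (∀ v ∈ Aud G F y \ insert y (Auu G F y), ∃ u ∈ Auu G F y, s(u, v) ∈ F) ∧
      (Aud G F y \ Auu G F y).card ≤ k * (Auu G F y).card + 1 := by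
  have hadj : ∀ v ∈ Aud G F y \ insert y (Auu G F y), ∃ u ∈ Auu G F y, s(u, v) ∈ F := by
    intro v hv
    simp only [mem_sdiff, mem_insert, not_or, Aud, mem_filter, mem_univ, true_and] at hv
    obtain ⟨⟨w, halt, htype⟩, hvy, hvA⟩ := hv
    have hpos : 0 < w.length :=
      Nat.pos_of_ne_zero fun h => hvy (SimpleGraph.Walk.eq_of_length_eq_zero h).symm
    obtain hlen | ⟨hfirst, hlast⟩ := htype
    · simp only [SimpleGraph.Walk.length_edges] at hlen
      omega
    rw [← w.getVert_length] at hvy hvA ⊢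
    exact w.exists_mem_Auu_mk_getVert_mem halt hfirst _ hpos le_rfl (by simpa using hlast) hvy hvA
  exact ⟨hadj, card_sdiff_le_mul_add_one hF.2 y hadj⟩

theorem stmt11 {V : Type*} [Fintype V] [DecidableEq V] (G : SimpleGraph V) (k : ℕ)
    (F : Finset (Sym2 V)) (hF : IsKMatching G k F) (hFmax : F.card = maxKMatch G k)
    (hlam : 0 < lamK G k)
    (y : V) (hy : edgeDeg F y < k) :
    (∀ v ∈ Aud G F y \ insert y (Auu G F y), ∃ u ∈ Auu G F y, s(u, v) ∈ F) ∧
      (Aud G F y \ Auu G F y).card ≤ k * (Auu G F y).card + 1 :=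
  stmt11_general G k F hF y
end

section
/- For any graph G with minimum degree δ, let Φ(G) be the set of edges uv of G such that both endpoint degrees satisfy δ+1 ≤ d(u), d(v) ≤ D for a fixed D ≥ δ+1. Then for any e ∈ Φ(G): Φ(G−e) ⊆ Φ(G) and |Φ(G)| ≤ |Φ(G−e)| + 2δ + 1. -/
/-!
Deleting `e` changes only the degrees of its endpoints, and lowers them. So an edge `f ≠ e` of
`Φ(G)` that is missing from `Φ(G − e)` is an edge of `G − e` at an endpoint of `e` whose degree in
`G − e` is at most `δ`; there are at most `2δ` such edges.
-/

open Finset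
open scoped Classical

/-- `Φ(G)`: the set of edges of `G` both of whose endpoint degrees lie in `{δ+1, …, D}`. -/
noncomputable def Phi {V : Type*} [Fintype V] (G : SimpleGraph V) (δ D : ℕ) :
    Finset (Sym2 V) :=
  G.edgeFinset.filter (fun e => ∀ v ∈ e, δ + 1 ≤ G.degree v ∧ G.degree v ≤ D)

-- Degrees in `G.deleteEdges s` must be computed with the classical `DecidableRel` instance,
-- which is the one `Phi` sees.
attribute [-instance] SimpleGraph.instDecidableRelAdjDeleteEdgesOfDecidablePredSym2MemSetOfDecidableEq

namespace SimpleGraph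

variable {V : Type*} [Fintype V] (G : SimpleGraph V)

lemma degree_deleteEdges_singleton_of_notMem {e : Sym2 V} {v : V} (hv : v ∉ e) :
    (G.deleteEdges {e}).degree v = G.degree v := by
  simp only [← card_neighborFinset_eq_degree]
  congr 1
  ext w
  simp only [mem_neighborFinset, deleteEdges_adj, Set.mem_singleton_iff, and_iff_left_iff_imp]
  rintro - rfl
  exact hv (Sym2.mem_mk_left v w)

lemma card_biUnion_incidenceFinset_le {s : Finset V} {δ : ℕ} (hs : ∀ v ∈ s, G.degree v ≤ δ) :
    #(s.biUnion fun v => G.incidenceFinset v) ≤ #s * δ :=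
  calc #(s.biUnion fun v => G.incidenceFinset v)
      ≤ ∑ v ∈ s, #(G.incidenceFinset v) := card_biUnion_le
    _ = ∑ v ∈ s, G.degree v := by simp only [card_incidenceFinset_eq_degree]
    _ ≤ #s * δ := sum_le_card_nsmul s _ δ hs

end SimpleGraph

open SimpleGraph

section

variable {V : Type*} [Fintype V] {G : SimpleGraph V} {δ D : ℕ}

lemma mem_Phi {f : Sym2 V} :
    f ∈ Phi G δ D ↔ f ∈ G.edgeSet ∧ ∀ v ∈ f, δ + 1 ≤ G.degree v ∧ G.degree v ≤ D := by
  simp only [Phi, mem_filter, mem_edgeFinset]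

lemma Phi_deleteEdges_subset {e : Sym2 V} (he : ∀ v ∈ e, G.degree v ≤ D) :
    Phi (G.deleteEdges {e}) δ D ⊆ Phi G δ D := by
  intro f hf
  rw [mem_Phi] at hf ⊢
  refine ⟨edgeSet_mono (G.deleteEdges_le {e}) hf.1, fun v hv => ?_⟩
  obtain ⟨hlow, hup⟩ := hf.2 v hv
  by_cases hve : v ∈ e
  · exact ⟨hlow.trans (degree_le_of_le (G.deleteEdges_le {e})), he v hve⟩
  · rw [degree_deleteEdges_singleton_of_notMem G hve] at hlow hup
    exact ⟨hlow, hup⟩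

lemma Phi_sdiff_Phi_deleteEdges_subset (e : Sym2 V) :
    Phi G δ D \ Phi (G.deleteEdges {e}) δ D ⊆
      insert e ({v ∈ e.toFinset | (G.deleteEdges {e}).degree v ≤ δ}.biUnion
        fun v => (G.deleteEdges {e}).incidenceFinset v) := by
  intro f hf
  rw [mem_sdiff, mem_Phi, mem_Phi] at hf
  obtain ⟨⟨hfG, hfdeg⟩, hf'⟩ := hf
  rcases eq_or_ne f e with rfl | hfe
  · exact mem_insert_self _ _
  have hfG' : f ∈ (G.deleteEdges {e}).edgeSet := by simp [hfG, hfe]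
  obtain ⟨v, hvf, hv⟩ : ∃ v ∈ f,
      δ < (G.deleteEdges {e}).degree v → D < (G.deleteEdges {e}).degree v := by
    simpa [hfG, hfe] using hf'
  have hvδ : (G.deleteEdges {e}).degree v ≤ δ := by
    have hle := degree_le_of_le (v := v) (G.deleteEdges_le {e})
    have hD := (hfdeg v hvf).2
    by_contra! hδ
    have := hv hδ
    omega
  have hve : v ∈ e := by
    by_contra hve
    rw [degree_deleteEdges_singleton_of_notMem G hve] at hvδ
    have := (hfdeg v hvf).1
    omega
  refine mem_insert_of_mem (mem_biUnion.2 ⟨v, ?_, ?_⟩)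
  · simpa [hve] using hvδ
  · exact (mem_incidenceFinset _ _ _).2 ⟨hfG', hvf⟩

lemma card_Phi_le_card_Phi_deleteEdges_add (e : Sym2 V) :
    #(Phi G δ D) ≤ #(Phi (G.deleteEdges {e}) δ D) + 2 * δ + 1 := by
  have hlost : #(Phi G δ D \ Phi (G.deleteEdges {e}) δ D) ≤ 2 * δ + 1 := calc
    _ ≤ #({v ∈ e.toFinset | (G.deleteEdges {e}).degree v ≤ δ}.biUnion
          fun v => (G.deleteEdges {e}).incidenceFinset v) + 1 :=
        (card_le_card (Phi_sdiff_Phi_deleteEdges_subset e)).trans (card_insert_le _ _)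
    _ ≤ #e.toFinset * δ + 1 := by
        gcongr
        refine (card_biUnion_incidenceFinset_le _ fun v hv => (mem_filter.1 hv).2).trans ?_
        gcongr
        exact filter_subset _ _
    _ ≤ 2 * δ + 1 := by
        gcongr
        rw [Sym2.card_toFinset]
        split_ifs <;> omega
  have := card_le_card_sdiff_add_card (s := Phi G δ D) (t := Phi (G.deleteEdges {e}) δ D)
  omega

end

theorem stmt13_general {V : Type*} [Fintype V]
    (G : SimpleGraph V) (δ D : ℕ)
    (e : Sym2 V) (he : e ∈ Phi G δ D) :
    Phi (G.deleteEdges {e}) δ D ⊆ Phi G δ D ∧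
      (Phi G δ D).card ≤ (Phi (G.deleteEdges {e}) δ D).card + 2 * δ + 1 :=
  ⟨Phi_deleteEdges_subset fun v hv => ((mem_Phi.1 he).2 v hv).2,
    card_Phi_le_card_Phi_deleteEdges_add e⟩

theorem stmt13 {V : Type*} [Fintype V] [DecidableEq V] [Nonempty V]
    (G : SimpleGraph V) (δ D : ℕ)
    (hδ : G.minDegree = δ) (hD : δ + 1 ≤ D)
    (e : Sym2 V) (he : e ∈ Phi G δ D) :
    Phi (G.deleteEdges {e}) δ D ⊆ Phi G δ D ∧
      (Phi G δ D).card ≤ (Phi (G.deleteEdges {e}) δ D).card + 2 * δ + 1 :=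
  stmt13_general G δ D e he
end
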